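/- arXiv:2603.08184 — 6 statements merged into one kernel-verified Lean document; each statement's English description precedes it below -/
import Mathlib

section
/- Let β ∈ (0,1] be real and let α ∈ ℂ with |α| < 1, and let φ_α(w) = (w − α)/(1 − conj(α)·w) be the Blaschke factor. Then the set S = { (1 − β·|w|²) / (1 − β·conj(w)·φ_α(w)) : w ∈ ℂ, |w| < 1 } ⊆ ℂ is closed under complex conjugation: for every z ∈ S, conj(z) ∈ S (hence S is symmetric about the real axis). -/
lemma aux_ne (x : ℂ) (hx : ‖x‖ < 1) : (1 : ℂ) - x ≠ 0 := by
  intro h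
  have : x = 1 := by linear_combination -h
  rw [this] at hx; simp at hx

/-- The Berezin range of the composition operator with Blaschke symbol
`φ_α(w) = (w − α)/(1 − conj(α)·w)` on `H²(β)` is closed under complex conjugation. -/
theorem stmt14 (β : ℝ) (hβ0 : 0 < β) (hβ1 : β ≤ 1) (α : ℂ) (hα : ‖α‖ < 1) :
    ∀ z ∈ {z : ℂ | ∃ w : ℂ, ‖w‖ < 1 ∧
        z = ((1 - β * ‖w‖ ^ 2 : ℝ) : ℂ) /
          (1 - (β : ℂ) * (starRingEnd ℂ w) * ((w - α) / (1 - (starRingEnd ℂ α) * w)))},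
      (starRingEnd ℂ z) ∈ {z : ℂ | ∃ w : ℂ, ‖w‖ < 1 ∧
        z = ((1 - β * ‖w‖ ^ 2 : ℝ) : ℂ) /
          (1 - (β : ℂ) * (starRingEnd ℂ w) * ((w - α) / (1 - (starRingEnd ℂ α) * w)))} := by
  rintro z ⟨w, hw, rfl⟩
  by_cases hα0 : α = 0
  · refine ⟨w, hw, ?_⟩
    subst hα0
    simp only [map_div₀, map_sub, map_mul, map_one, Complex.conj_conj, Complex.conj_ofReal,
      map_zero, sub_zero, zero_mul, div_one, Complex.ofReal_sub, Complex.ofReal_one,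
      Complex.ofReal_mul]
    ring_nf
  · set c : ℂ := α / starRingEnd ℂ α with hc
    have hαc : starRingEnd ℂ α ≠ 0 := by simpa using hα0
    refine ⟨c * starRingEnd ℂ w, ?_, ?_⟩
    · have : ‖c‖ = 1 := by
        rw [hc, norm_div, RCLike.norm_conj, div_self (by simpa using hα0)]
      rw [norm_mul, this, one_mul, RCLike.norm_conj]; exact hw
    · have hnc : ‖c * starRingEnd ℂ w‖ = ‖w‖ := by
        have : ‖c‖ = 1 := by
          rw [hc, norm_div, RCLike.norm_conj, div_self (by simpa using hα0)]
        rw [norm_mul, this, one_mul, RCLike.norm_conj]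
      rw [hnc]
      have h1 : (1 : ℂ) - starRingEnd ℂ α * w ≠ 0 := by
        apply aux_ne
        rw [norm_mul, RCLike.norm_conj]
        calc ‖α‖ * ‖w‖ ≤ ‖α‖ * 1 := by nlinarith [norm_nonneg α, norm_nonneg w]
        _ < 1 := by simpa using hα
      have h2 : (1 : ℂ) - α * starRingEnd ℂ w ≠ 0 := by
        apply aux_ne
        rw [norm_mul, RCLike.norm_conj]
        calc ‖α‖ * ‖w‖ ≤ ‖α‖ * 1 := by nlinarith [norm_nonneg α, norm_nonneg w]
        _ < 1 := by simpa using hα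
      -- the inner denominator at the new point equals 1 - α * conj w
      have hden : (1 : ℂ) - starRingEnd ℂ α * (c * starRingEnd ℂ w)
          = 1 - α * starRingEnd ℂ w := by
        rw [hc]; field_simp
      -- equality of denominators after conjugation
      have key : (β : ℂ) * w * ((starRingEnd ℂ w - starRingEnd ℂ α) / (1 - α * starRingEnd ℂ w))
          = (β : ℂ) * starRingEnd ℂ (c * starRingEnd ℂ w) *
            ((c * starRingEnd ℂ w - α) / (1 - starRingEnd ℂ α * (c * starRingEnd ℂ w))) := by
        rw [hden, hc, map_mul, map_div₀, Complex.conj_conj, Complex.conj_conj]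
        field_simp
      simp only [map_div₀, map_sub, map_mul, map_one, Complex.conj_conj, Complex.conj_ofReal]
      rw [map_mul, Complex.conj_conj] at key
      rw [← key]
end

section
/- Let β ∈ (0,1] be real and let n ≥ 1 be a natural number with n < β·(n+1). Then { (1 − β·|λ|²)·|λ|^{2n} : λ ∈ ℂ, |λ| < 1 } equals the closed real interval [0, (n/(β·(n+1)))^n · (1/(n+1))]; in particular, this set is convex. -/
lemma aux1 (n : ℕ) (v : ℝ) (hv : -1 ≤ v) : (1 - n * v) * (1 + v) ^ n ≤ 1 := by
  induction n with
  | zero => simp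
  | succ n ih =>
    have h0 : (0:ℝ) ≤ 1 + v := by linarith
    have hp : (0:ℝ) ≤ (1 + v) ^ n := pow_nonneg h0 n
    rw [pow_succ]
    push_cast
    push_cast at ih
    nlinarith [mul_nonneg hp (sq_nonneg v), ih]

lemma aux2 (n : ℕ) (hn : 1 ≤ n) (s : ℝ) (hs : 0 ≤ s) :
    (1 - s) * s ^ n * ((n:ℝ) + 1) ^ (n + 1) ≤ (n:ℝ) ^ n := by
  have hn0 : (0:ℝ) < n := by exact_mod_cast hn
  have hv : -1 ≤ s * ((n:ℝ)+1) / n - 1 := by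
    have : 0 ≤ s * ((n:ℝ)+1) / n := by positivity
    linarith
  have h := aux1 n _ hv
  have h1 : (1 + (s * ((n:ℝ)+1) / n - 1)) = s * ((n:ℝ)+1) / n := by ring
  have h2 : (1 - n * (s * ((n:ℝ)+1) / n - 1)) = ((n:ℝ)+1) * (1 - s) := by
    field_simp; ring
  rw [h1, h2, div_pow, mul_pow, ← mul_div_assoc] at h
  have hnp : (0:ℝ) < (n:ℝ)^n := by positivity
  have h4 := (div_le_one hnp).mp h
  calc (1 - s) * s ^ n * ((n:ℝ) + 1) ^ (n + 1)
      = ((n:ℝ)+1) * (1-s) * (s ^ n * ((n:ℝ)+1)^n) := by rw [pow_succ]; ring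
    _ ≤ (n:ℝ)^n := h4

/-- The Berezin range of the rank one operator `A(f) = ⟨f, zⁿ⟩·zⁿ` on `H²(β)` is the
interval `[0, (n/(β(n+1)))ⁿ·(1/(n+1))]`, hence convex. -/
theorem stmt15 (β : ℝ) (hβ0 : 0 < β) (hβ1 : β ≤ 1) (n : ℕ) (hn : 1 ≤ n)
    (hnβ : (n : ℝ) < β * (n + 1)) :
    {x : ℝ | ∃ lam : ℂ, ‖lam‖ < 1 ∧ x = (1 - β * ‖lam‖ ^ 2) * ‖lam‖ ^ (2 * n)}
        = Set.Icc (0 : ℝ) (((n : ℝ) / (β * ((n : ℝ) + 1))) ^ n * (1 / ((n : ℝ) + 1)))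
      ∧ Convex ℝ
          {x : ℝ | ∃ lam : ℂ, ‖lam‖ < 1 ∧ x = (1 - β * ‖lam‖ ^ 2) * ‖lam‖ ^ (2 * n)} := by
  have hn0 : (0:ℝ) < n := by exact_mod_cast hn
  have hMeq : ((n : ℝ) / (β * ((n : ℝ) + 1))) ^ n * (1 / ((n : ℝ) + 1))
      = (n:ℝ)^n / (β^n * ((n:ℝ)+1)^(n+1)) := by
    rw [div_pow, mul_pow, pow_succ]
    field_simp
  have hset : {x : ℝ | ∃ lam : ℂ, ‖lam‖ < 1 ∧ x = (1 - β * ‖lam‖ ^ 2) * ‖lam‖ ^ (2 * n)}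
      = Set.Icc (0 : ℝ) (((n : ℝ) / (β * ((n : ℝ) + 1))) ^ n * (1 / ((n : ℝ) + 1))) := by
    ext x
    constructor
    · rintro ⟨lam, hl, rfl⟩
      set r := ‖lam‖ with hr
      have hr0 : 0 ≤ r := norm_nonneg _
      constructor
      · have h1 : 0 ≤ 1 - β * r ^ 2 := by nlinarith
        have h2 : 0 ≤ r ^ (2*n) := by positivity
        positivity
      · have key := aux2 n hn (β * r^2) (by positivity)
        have e : (β * r^2)^n = β^n * r^(2*n) := by rw [mul_pow, pow_mul]
        rw [e] at key
        rw [hMeq, le_div_iff₀ (by positivity)]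
        nlinarith [key]
    · rintro ⟨hx0, hxM⟩
      set g : ℝ → ℝ := fun r => (1 - β * r^2) * r^(2*n) with hg
      have hgc : Continuous g := by
        exact (continuous_const.sub (continuous_const.mul (continuous_pow 2))).mul
          (continuous_pow (2*n))
      set t : ℝ := (n:ℝ) / (β * ((n:ℝ)+1)) with ht
      have ht0 : 0 < t := by positivity
      have ht1 : t < 1 := (div_lt_one (by positivity)).mpr hnβ
      set R : ℝ := Real.sqrt t with hR
      have hR0 : 0 ≤ R := Real.sqrt_nonneg t
      have hRs : R^2 = t := Real.sq_sqrt ht0.le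
      have hR1 : R < 1 := by nlinarith
      have hg0 : g 0 = 0 := by
        show (1 - β * (0:ℝ)^2) * (0:ℝ)^(2*n) = 0
        rw [zero_pow (by omega : 2*n ≠ 0), mul_zero]
      have hgR : g R = t ^ n * (1 / ((n : ℝ) + 1)) := by
        simp only [hg]
        rw [pow_mul, hRs]
        have hb : 1 - β * t = 1 / ((n:ℝ)+1) := by
          rw [ht]; field_simp
          ring
        rw [hb]; ring
      have hIVT := intermediate_value_Icc hR0 hgc.continuousOn
      have hx : x ∈ Set.Icc (g 0) (g R) := by
        rw [hg0, hgR]; exact ⟨hx0, hxM⟩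
      obtain ⟨r, ⟨hrl, hru⟩, hgr⟩ := hIVT hx
      refine ⟨(r:ℂ), ?_, ?_⟩
      · rw [Complex.norm_real, Real.norm_eq_abs, abs_of_nonneg hrl]
        exact lt_of_le_of_lt hru hR1
      · rw [Complex.norm_real, Real.norm_eq_abs, abs_of_nonneg hrl]
        exact hgr.symm
  exact ⟨hset, hset ▸ convex_Icc _ _⟩
end

section
/- Let β ∈ (0,1] be real, let N ≥ 1, and let g₁, …, g_N : 𝔻 → ℂ be holomorphic functions on the open unit disc 𝔻 = {λ ∈ ℂ : |λ| < 1}. Then the set { (1 − β·|λ|²) · Σ_{i=1}^N |g_i(λ)|² : λ ∈ 𝔻 } ⊆ ℝ is convex (it is an interval or a single point). -/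
/-- The Berezin range of the finite rank operator `A(f) = Σᵢ ⟨f, gᵢ⟩·gᵢ` on `H²(β)` is a
convex subset of `ℝ`. -/
theorem stmt16 (β : ℝ) (hβ0 : 0 < β) (hβ1 : β ≤ 1) (N : ℕ) (hN : 1 ≤ N)
    (g : Fin N → ℂ → ℂ)
    (hg : ∀ i, DifferentiableOn ℂ (g i) (Metric.ball (0 : ℂ) 1)) :
    Convex ℝ {x : ℝ | ∃ lam : ℂ, ‖lam‖ < 1 ∧
        x = (1 - β * ‖lam‖ ^ 2) * ∑ i, ‖g i lam‖ ^ 2} := by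
  have hset : {x : ℝ | ∃ lam : ℂ, ‖lam‖ < 1 ∧
      x = (1 - β * ‖lam‖ ^ 2) * ∑ i, ‖g i lam‖ ^ 2}
      = (fun lam : ℂ => (1 - β * ‖lam‖ ^ 2) * ∑ i, ‖g i lam‖ ^ 2) '' Metric.ball 0 1 := by
    ext x
    simp [Metric.mem_ball, Complex.dist_eq, eq_comm]
  rw [hset]
  have hconn : IsPreconnected ((fun lam : ℂ =>
      (1 - β * ‖lam‖ ^ 2) * ∑ i, ‖g i lam‖ ^ 2) '' Metric.ball 0 1) := by
    apply IsPreconnected.image (Convex.isPreconnected (convex_ball (0:ℂ) 1))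
    apply ContinuousOn.mul
    · fun_prop
    · exact continuousOn_finset_sum _ fun i _ => ((hg i).continuousOn.norm.pow 2)
  exact hconn.ordConnected.convex
end

section
/- Let β ∈ (0,1] be real and let m, n be natural numbers with m > n and m + n < β·(m+n+2). Then { (1 − β·|λ|²)·|λ|^{2n}·λ^{m−n} : λ ∈ ℂ, |λ| < 1 } equals the closed disc { z ∈ ℂ : |z| ≤ R } centered at the origin with radius R = (2/(m+n+2)) · ((m+n)/(β·(m+n+2)))^{(m+n)/2}; in particular, this set is convex. -/
open Real

lemma core17 (K : ℝ) (hK : 1 ≤ K) (u : ℝ) (hu0 : 0 ≤ u) (hu1 : u ≤ 1) :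
    (1 - u) * u ^ (K / 2) ≤ (2 / (K + 2)) * (K / (K + 2)) ^ (K / 2) := by
  have hK2 : (0:ℝ) < K + 2 := by linarith
  have hw1p : (0:ℝ) < 2 / (K + 2) := by positivity
  have hw2p : (0:ℝ) < K / (K + 2) := by positivity
  have h1u : 0 ≤ 1 - u := by linarith
  have key : (1 - u) ^ (2 / (K + 2)) * u ^ (K / (K + 2))
      ≤ (2 / (K + 2)) ^ (2 / (K + 2)) * (K / (K + 2)) ^ (K / (K + 2)) := by
    have hgm := Real.geom_mean_le_arith_mean2_weighted hw1p.le hw2p.le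
      (p₁ := (1 - u) / (2 / (K + 2))) (p₂ := u / (K / (K + 2)))
      (by positivity) (by positivity) (by field_simp; ring)
    have hsum : 2 / (K + 2) * ((1 - u) / (2 / (K + 2))) + K / (K + 2) * (u / (K / (K + 2))) = 1 := by
      field_simp
      ring
    rw [hsum] at hgm
    have e1 : (1 - u) ^ (2 / (K + 2)) = ((1 - u) / (2 / (K + 2))) ^ (2 / (K + 2)) * (2 / (K + 2)) ^ (2 / (K + 2)) := by
      rw [← Real.mul_rpow (by positivity) hw1p.le, div_mul_cancel₀]
      exact hw1p.ne'
    have e2 : u ^ (K / (K + 2)) = (u / (K / (K + 2))) ^ (K / (K + 2)) * (K / (K + 2)) ^ (K / (K + 2)) := by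
      rw [← Real.mul_rpow (by positivity) hw2p.le, div_mul_cancel₀]
      exact hw2p.ne'
    calc (1 - u) ^ (2 / (K + 2)) * u ^ (K / (K + 2))
        = ((1 - u) / (2 / (K + 2))) ^ (2 / (K + 2)) * (u / (K / (K + 2))) ^ (K / (K + 2))
          * ((2 / (K + 2)) ^ (2 / (K + 2)) * (K / (K + 2)) ^ (K / (K + 2))) := by
          rw [e1, e2]; ring
      _ ≤ 1 * ((2 / (K + 2)) ^ (2 / (K + 2)) * (K / (K + 2)) ^ (K / (K + 2))) := by
          apply mul_le_mul_of_nonneg_right (hgm.trans_eq rfl) (by positivity)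
      _ = _ := one_mul _
  have hpow := Real.rpow_le_rpow (by positivity) key (le_of_lt (by positivity : (0:ℝ) < (K + 2) / 2))
  rw [Real.mul_rpow (by positivity) (by positivity),
      Real.mul_rpow (by positivity) (by positivity),
      ← Real.rpow_mul h1u, ← Real.rpow_mul hu0,
      ← Real.rpow_mul hw1p.le, ← Real.rpow_mul hw2p.le] at hpow
  have eA : 2 / (K + 2) * ((K + 2) / 2) = 1 := by field_simp
  have eB : K / (K + 2) * ((K + 2) / 2) = K / 2 := by field_simp
  rw [eA, eB, Real.rpow_one, Real.rpow_one] at hpow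
  exact hpow

lemma bound17 (β : ℝ) (hβ0 : 0 < β) (k : ℕ) (hk : 1 ≤ k) (r : ℝ) (hr0 : 0 ≤ r)
    (hu : β * r ^ 2 ≤ 1) :
    (1 - β * r ^ 2) * r ^ k ≤ 2 / ((k:ℝ) + 2) * ((k:ℝ) / (β * ((k:ℝ) + 2))) ^ ((k:ℝ) / 2) := by
  have hK : (1:ℝ) ≤ (k:ℝ) := by exact_mod_cast hk
  have hK2 : (0:ℝ) < (k:ℝ) + 2 := by linarith
  have hu0 : 0 ≤ β * r ^ 2 := by positivity
  have hrk : r ^ k = (β * r ^ 2 / β) ^ ((k:ℝ) / 2) := by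
    rw [show β * r ^ 2 / β = r ^ 2 by field_simp]
    rw [← Real.rpow_natCast r k, ← Real.rpow_natCast r 2, ← Real.rpow_mul hr0,
      show ((2:ℕ):ℝ) * ((k:ℝ)/2) = (k:ℝ) by push_cast; ring]
  have hcore := core17 (k:ℝ) hK (β * r ^ 2) hu0 hu
  calc (1 - β * r ^ 2) * r ^ k
      = (1 - β * r ^ 2) * (β * r ^ 2) ^ ((k:ℝ)/2) / β ^ ((k:ℝ)/2) := by
        rw [hrk, Real.div_rpow hu0 hβ0.le]; ring
    _ ≤ 2 / ((k:ℝ) + 2) * ((k:ℝ) / ((k:ℝ) + 2)) ^ ((k:ℝ)/2) / β ^ ((k:ℝ)/2) := by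
        exact (div_le_div_iff_of_pos_right (by positivity)).mpr hcore
    _ = _ := by
        rw [show (k:ℝ) / (β * ((k:ℝ) + 2)) = ((k:ℝ) / ((k:ℝ)+2)) / β by
          rw [div_div, mul_comm], Real.div_rpow (by positivity) hβ0.le]
        ring

lemma value17 (β : ℝ) (hβ0 : 0 < β) (k : ℕ) (hk : 1 ≤ k) :
    (1 - β * (Real.sqrt ((k:ℝ) / (β * ((k:ℝ) + 2)))) ^ 2)
        * (Real.sqrt ((k:ℝ) / (β * ((k:ℝ) + 2)))) ^ k
      = 2 / ((k:ℝ) + 2) * ((k:ℝ) / (β * ((k:ℝ) + 2))) ^ ((k:ℝ) / 2) := by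
  have hK2 : (0:ℝ) < (k:ℝ) + 2 := by positivity
  set c : ℝ := (k:ℝ) / (β * ((k:ℝ) + 2)) with hc
  have hc0 : 0 ≤ c := by positivity
  have h1 : Real.sqrt c ^ 2 = c := Real.sq_sqrt hc0
  have h2 : 1 - β * c = 2 / ((k:ℝ) + 2) := by
    rw [hc]; field_simp; ring
  have h3 : Real.sqrt c ^ k = c ^ ((k:ℝ) / 2) := by
    rw [Real.sqrt_eq_rpow, ← Real.rpow_natCast (c ^ ((1:ℝ)/2)) k, ← Real.rpow_mul hc0]
    rw [show (1:ℝ)/2 * (k:ℝ) = (k:ℝ)/2 by ring]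
  rw [h1, h2, h3]

lemma surj17 (β : ℝ) (hβ0 : 0 < β) (k : ℕ) (hk : 1 ≤ k)
    (h : ((k:ℝ)) < β * ((k:ℝ) + 2)) (t : ℝ) (ht0 : 0 ≤ t)
    (ht : t ≤ 2 / ((k:ℝ) + 2) * ((k:ℝ) / (β * ((k:ℝ) + 2))) ^ ((k:ℝ) / 2)) :
    ∃ r : ℝ, 0 ≤ r ∧ r < 1 ∧ (1 - β * r ^ 2) * r ^ k = t := by
  have hK2 : (0:ℝ) < (k:ℝ) + 2 := by positivity
  set c : ℝ := (k:ℝ) / (β * ((k:ℝ) + 2)) with hc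
  have hc0 : 0 ≤ c := by positivity
  have hc1 : c < 1 := (div_lt_one (by positivity)).mpr h
  have hs1 : Real.sqrt c < 1 := by
    rw [show (1:ℝ) = Real.sqrt 1 by simp]
    exact Real.sqrt_lt_sqrt hc0 hc1
  have hs0 : (0:ℝ) ≤ Real.sqrt c := Real.sqrt_nonneg c
  have hcont : ContinuousOn (fun r : ℝ => (1 - β * r ^ 2) * r ^ k)
      (Set.Icc 0 (Real.sqrt c)) := by fun_prop
  have hmem := intermediate_value_Icc hs0 hcont
  have htmem : t ∈ Set.Icc ((fun r : ℝ => (1 - β * r ^ 2) * r ^ k) 0)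
      ((fun r : ℝ => (1 - β * r ^ 2) * r ^ k) (Real.sqrt c)) := by
    simp only
    rw [zero_pow (by omega : k ≠ 0), mul_zero]
    exact ⟨ht0, by rw [value17 β hβ0 k hk]; exact ht⟩
  obtain ⟨r, hrIcc, hfr⟩ := hmem htmem
  exact ⟨r, hrIcc.1, lt_of_le_of_lt hrIcc.2 hs1, hfr⟩

/-- The Berezin range of the rank one operator `A(f) = ⟨f, zⁿ⟩·zᵐ` (with `m > n`) on
`H²(β)` is the closed disc centered at the origin of radius
`(2/(m+n+2))·((m+n)/(β(m+n+2)))^{(m+n)/2}`, hence convex. -/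
theorem stmt17 (β : ℝ) (hβ0 : 0 < β) (hβ1 : β ≤ 1) (m n : ℕ) (hmn : n < m)
    (h : ((m : ℝ) + n) < β * ((m : ℝ) + n + 2)) :
    {z : ℂ | ∃ lam : ℂ, ‖lam‖ < 1 ∧
        z = ((1 - β * ‖lam‖ ^ 2 : ℝ) : ℂ) * ((‖lam‖ ^ (2 * n) : ℝ) : ℂ) * lam ^ (m - n)}
        = Metric.closedBall (0 : ℂ)
            ((2 / ((m : ℝ) + n + 2))
              * (((m : ℝ) + n) / (β * ((m : ℝ) + n + 2))) ^ (((m : ℝ) + n) / 2))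
      ∧ Convex ℝ {z : ℂ | ∃ lam : ℂ, ‖lam‖ < 1 ∧
          z = ((1 - β * ‖lam‖ ^ 2 : ℝ) : ℂ) * ((‖lam‖ ^ (2 * n) : ℝ) : ℂ) * lam ^ (m - n)} := by
  have hk1 : 1 ≤ m + n := by omega
  have hcast : ((m:ℝ) + n) = ((m + n : ℕ) : ℝ) := by push_cast; ring
  have hEq : {z : ℂ | ∃ lam : ℂ, ‖lam‖ < 1 ∧
        z = ((1 - β * ‖lam‖ ^ 2 : ℝ) : ℂ) * ((‖lam‖ ^ (2 * n) : ℝ) : ℂ) * lam ^ (m - n)}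
        = Metric.closedBall (0 : ℂ)
            ((2 / ((m : ℝ) + n + 2))
              * (((m : ℝ) + n) / (β * ((m : ℝ) + n + 2))) ^ (((m : ℝ) + n) / 2)) := by
    rw [hcast]
    set k : ℕ := m + n with hkdef
    set R : ℝ := 2 / ((k:ℝ) + 2) * ((k:ℝ) / (β * ((k:ℝ) + 2))) ^ ((k:ℝ) / 2) with hR
    ext z
    simp only [Set.mem_setOf_eq, Metric.mem_closedBall, dist_zero_right]
    constructor
    · rintro ⟨lam, hlt, rfl⟩
      set r : ℝ := ‖lam‖ with hrdef
      have hr0 : 0 ≤ r := norm_nonneg _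
      have hbr : β * r ^ 2 ≤ 1 := by nlinarith
      have hnorm : ‖((1 - β * r ^ 2 : ℝ) : ℂ) * ((r ^ (2 * n) : ℝ) : ℂ) * lam ^ (m - n)‖
          = (1 - β * r ^ 2) * r ^ k := by
        rw [norm_mul, norm_mul, norm_pow, Complex.norm_real, Complex.norm_real]
        rw [Real.norm_eq_abs, Real.norm_eq_abs, abs_of_nonneg (by nlinarith : (0:ℝ) ≤ 1 - β * r ^ 2),
          abs_of_nonneg (by positivity : (0:ℝ) ≤ r ^ (2*n))]
        rw [mul_assoc, ← pow_add, show 2 * n + (m - n) = k by omega]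
      rw [hnorm]
      exact bound17 β hβ0 k hk1 r hr0 hbr
    · intro hz
      obtain ⟨r, hr0, hr1, hfr⟩ := surj17 β hβ0 k hk1
        (by rw [hcast] at h; exact h) ‖z‖ (norm_nonneg z) hz
      set d : ℕ := m - n with hddef
      have hd0 : d ≠ 0 := by omega
      refine ⟨(r : ℂ) * Complex.exp ((z.arg / d : ℝ) * Complex.I), ?_, ?_⟩
      · rw [norm_mul, Complex.norm_real, Real.norm_eq_abs, abs_of_nonneg hr0,
          Complex.norm_exp]
        simp [hr1]
      · have hnl : ‖(r : ℂ) * Complex.exp ((z.arg / d : ℝ) * Complex.I)‖ = r := by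
          rw [norm_mul, Complex.norm_real, Real.norm_eq_abs, abs_of_nonneg hr0,
            Complex.norm_exp]
          simp
        rw [hnl]
        rw [mul_pow, ← Complex.exp_nat_mul]
        have harg : (d : ℂ) * (((z.arg / d : ℝ)) * Complex.I) = (z.arg : ℂ) * Complex.I := by
          push_cast
          rw [← mul_assoc, mul_div_cancel₀]
          exact_mod_cast (Nat.cast_ne_zero (R := ℂ)).mpr hd0
        rw [harg]
        have : ((1 - β * r ^ 2 : ℝ) : ℂ) * ((r ^ (2 * n) : ℝ) : ℂ) * ((r : ℂ) ^ d * Complex.exp ((z.arg : ℂ) * Complex.I))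
            = ((‖z‖ : ℝ) : ℂ) * Complex.exp ((z.arg : ℂ) * Complex.I) := by
          rw [← hfr]
          push_cast
          rw [show ((1:ℂ) - β * r ^ 2) * r ^ (2*n) * ((r:ℂ) ^ d * Complex.exp ((z.arg : ℂ) * Complex.I))
            = ((1:ℂ) - β * r ^ 2) * (r ^ (2*n) * (r:ℂ) ^ d) * Complex.exp ((z.arg : ℂ) * Complex.I) by ring,
            ← pow_add, show 2 * n + d = k by omega]
        rw [this, Complex.norm_mul_exp_arg_mul_I]
  exact ⟨hEq, hEq ▸ convex_closedBall _ _⟩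
end

section
/- Let n ≥ 1 be a natural number, let α > 0 be real, and let λ ∈ ℂ with |λ| ≤ 1. Then the set { exp(α·(λ − 1)·‖w‖²) : w ∈ ℂⁿ } ⊆ ℂ, where ‖w‖² = Σ_{i=1}^n |w_i|² and exp is the complex exponential, is convex if and only if λ is real and −1 ≤ λ ≤ 1. -/
lemma sum_norm_sq_surj (n : ℕ) (hn : 1 ≤ n) (t : ℝ) (ht : 0 ≤ t) :
    ∃ w : Fin n → ℂ, (∑ i, ‖w i‖ ^ 2 : ℝ) = t := by
  refine ⟨Pi.single ⟨0, hn⟩ ((Real.sqrt t : ℝ) : ℂ), ?_⟩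
  rw [Finset.sum_eq_single (⟨0, hn⟩ : Fin n)]
  · simp [Real.sq_sqrt ht]
  · intro i _ hi
    simp [Pi.single_eq_of_ne hi]
  · simp

/-- Convexity of the Berezin range of the composition operator `C_φ`, `φ(z) = λ·I z`,
on the Fock space `F²_α(ℂⁿ)`. -/
theorem stmt18 (n : ℕ) (hn : 1 ≤ n) (α : ℝ) (hα : 0 < α) (lam : ℂ) (hlam : ‖lam‖ ≤ 1) :
    Convex ℝ {z : ℂ | ∃ w : Fin n → ℂ,
        z = Complex.exp ((α : ℂ) * (lam - 1) * ((∑ i, ‖w i‖ ^ 2 : ℝ) : ℂ))}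
      ↔ (lam.im = 0 ∧ -1 ≤ lam.re ∧ lam.re ≤ 1) := by
  set S : Set ℂ := {z : ℂ | ∃ w : Fin n → ℂ,
      z = Complex.exp ((α : ℂ) * (lam - 1) * ((∑ i, ‖w i‖ ^ 2 : ℝ) : ℂ))} with hSdef
  set c : ℂ := (α : ℂ) * (lam - 1) with hc
  have habs_re : |lam.re| ≤ 1 := le_trans (Complex.abs_re_le_norm lam) hlam
  have hre1 : lam.re ≤ 1 := (abs_le.mp habs_re).2
  have hcre : c.re = α * (lam.re - 1) := by simp [hc, Complex.mul_re]
  have hcim : c.im = α * lam.im := by simp [hc, Complex.mul_im]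
  -- membership: for t ≥ 0, exp (c * t) ∈ S
  have hmem : ∀ t : ℝ, 0 ≤ t → Complex.exp (c * t) ∈ S := by
    intro t ht
    obtain ⟨w, hw⟩ := sum_norm_sq_surj n hn t ht
    exact ⟨w, by rw [hw]⟩
  constructor
  · intro hS
    -- first show lam.im = 0 by contradiction
    have him : lam.im = 0 := by
      by_contra him
      set a : ℝ := α * (lam.re - 1) with ha
      set b : ℝ := α * lam.im with hb
      have hb0 : b ≠ 0 := mul_ne_zero (ne_of_gt hα) him
      have hre_lt : lam.re < 1 := by
        rcases lt_or_eq_of_le hre1 with h | h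
        · exact h
        · exfalso
          have habsl : ‖lam‖ ≤ 1 := hlam
          have h1 : lam.re ^ 2 + lam.im ^ 2 ≤ 1 := by
            nlinarith [Complex.normSq_apply lam, Complex.sq_norm lam,
              norm_nonneg lam, habsl]
          have h2 : 0 < lam.im ^ 2 := pow_two_pos_of_ne_zero him
          nlinarith
      have ha0 : a < 0 := by
        have : lam.re - 1 < 0 := by linarith
        exact mul_neg_of_pos_of_neg hα this
      set t₁ : ℝ := Real.pi / |b| with ht₁
      have ht₁pos : 0 < t₁ := div_pos Real.pi_pos (abs_pos.mpr hb0)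
      set r : ℝ := Real.exp (a * t₁) with hr
      have hr0 : 0 < r := Real.exp_pos _
      have hr1 : r < 1 := by
        rw [hr, Real.exp_lt_one_iff]
        exact mul_neg_of_neg_of_pos ha0 ht₁pos
      -- real part of exponent
      have hres : ∀ s : ℝ, ((α : ℂ) * (lam - 1) * ((s : ℝ) : ℂ)).re = a * s := by
        intro s
        rw [← hc, Complex.mul_re, hcre]
        simp
      -- exp (c * t₁) = -r
      have hct : c * (t₁ : ℂ) = ((a * t₁ : ℝ) : ℂ) + ((b * t₁ : ℝ) : ℂ) * Complex.I := by
        rw [← Complex.re_add_im c, hcre, hcim]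
        push_cast
        ring
      have hbt : Complex.exp (((b * t₁ : ℝ) : ℂ) * Complex.I) = -1 := by
        rcases lt_or_gt_of_ne hb0 with hbneg | hbpos
        · have hbt1 : b * t₁ = -Real.pi := by
            rw [ht₁, abs_of_neg hbneg]
            field_simp
          rw [hbt1]
          push_cast
          rw [neg_mul, Complex.exp_neg, Complex.exp_pi_mul_I]
          norm_num
        · have hbt1 : b * t₁ = Real.pi := by
            rw [ht₁, abs_of_pos hbpos]
            field_simp
          rw [hbt1, Complex.exp_pi_mul_I]
      have hz1 : Complex.exp (c * (t₁ : ℂ)) = ((-r : ℝ) : ℂ) := by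
        rw [hct, Complex.exp_add, hbt, ← Complex.ofReal_exp, ← hr]
        push_cast; ring
      have h1S : (1 : ℂ) ∈ S := by
        have := hmem 0 le_rfl
        simpa using this
      have hz1S : ((-r : ℝ) : ℂ) ∈ S := by
        rw [← hz1]; exact hmem t₁ ht₁pos.le
      -- segment from -r to 1 is inside S
      have hseg : (Complex.ofRealAm.toLinearMap.toAffineMap : ℝ →ᵃ[ℝ] ℂ) ''
          segment ℝ (-r) 1 ⊆ S := by
        rw [image_segment]
        have e1 : (Complex.ofRealAm.toLinearMap.toAffineMap : ℝ →ᵃ[ℝ] ℂ) (-r)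
            = ((-r : ℝ) : ℂ) := rfl
        have e2 : (Complex.ofRealAm.toLinearMap.toAffineMap : ℝ →ᵃ[ℝ] ℂ) 1 = (1 : ℂ) := by
          simp [Complex.ofRealAm]
        rw [e1, e2]
        exact hS.segment_subset hz1S h1S
      have hsegIcc : segment ℝ (-r) (1 : ℝ) = Set.Icc (-r) 1 :=
        segment_eq_Icc (by linarith)
      have hpmem : ((r / 2 : ℝ) : ℂ) ∈ S := by
        apply hseg
        exact ⟨r / 2, by rw [hsegIcc]; constructor <;> linarith, rfl⟩
      have hnpmem : ((-(r / 2) : ℝ) : ℂ) ∈ S := by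
        apply hseg
        exact ⟨-(r / 2), by rw [hsegIcc]; constructor <;> linarith, rfl⟩
      -- extract the parameters
      obtain ⟨w1, hw1⟩ := hpmem
      obtain ⟨w2, hw2⟩ := hnpmem
      set s1 : ℝ := ∑ i, ‖w1 i‖ ^ 2 with hs1
      set s2 : ℝ := ∑ i, ‖w2 i‖ ^ 2 with hs2
      -- compare absolute values
      have habs1 : Real.exp (a * s1) = r / 2 := by
        have h := congrArg (‖·‖) hw1
        rw [Complex.norm_real, Real.norm_eq_abs, Complex.norm_exp, hres s1,
          abs_of_pos (by linarith : (0:ℝ) < r / 2)] at h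
        exact h.symm
      have habs2 : Real.exp (a * s2) = r / 2 := by
        have h := congrArg (‖·‖) hw2
        rw [Complex.norm_real, Real.norm_eq_abs, Complex.norm_exp, hres s2, abs_neg,
          abs_of_pos (by linarith : (0:ℝ) < r / 2)] at h
        exact h.symm
      have hs12 : s1 = s2 := by
        have := Real.exp_injective (habs1.trans habs2.symm)
        exact mul_left_cancel₀ (ne_of_lt ha0) this
      have hcontr : ((r / 2 : ℝ) : ℂ) = ((-(r / 2) : ℝ) : ℂ) := by
        rw [hw1, hw2, hs12]
      have : (r / 2 : ℝ) = -(r / 2) := by exact_mod_cast hcontr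
      linarith
    refine ⟨him, (abs_le.mp habs_re).1, hre1⟩
  · rintro ⟨him, hrege, hrele⟩
    rcases eq_or_lt_of_le hre1 with h1 | h1
    · -- lam = 1, S = {1}
      have hlam1 : lam = 1 := Complex.ext (by simp [← h1]) (by simp [him])
      have hc0 : c = 0 := by rw [hc, hlam1]; ring
      have hS1 : S = {(1 : ℂ)} := by
        ext z
        constructor
        · rintro ⟨w, hw⟩
          rw [hw, ← hc, hc0]
          simp
        · intro hz
          rw [Set.mem_singleton_iff] at hz
          refine ⟨0, ?_⟩
          rw [hz, ← hc, hc0]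
          simp
      rw [hS1]
      exact convex_singleton 1
    · -- lam.re < 1 : S = ofReal '' Ioc 0 1
      set cR : ℝ := α * (lam.re - 1) with hcR
      have hcR0 : cR < 0 := mul_neg_of_pos_of_neg hα (by linarith)
      have hceq : c = ((cR : ℝ) : ℂ) :=
        Complex.ext (by rw [hcre]; simp) (by rw [hcim, him]; simp)
      have hSeq : S = (Complex.ofRealAm.toLinearMap : ℝ →ₗ[ℝ] ℂ) '' Set.Ioc 0 1 := by
        ext z
        constructor
        · rintro ⟨w, hw⟩
          rw [← hc] at hw
          set t : ℝ := ∑ i, ‖w i‖ ^ 2 with hts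
          have ht0 : 0 ≤ t := Finset.sum_nonneg fun i _ => sq_nonneg _
          refine ⟨Real.exp (cR * t), ⟨Real.exp_pos _, ?_⟩, ?_⟩
          · rw [Real.exp_le_one_iff]
            exact mul_nonpos_of_nonpos_of_nonneg hcR0.le ht0
          · show ((Real.exp (cR * t) : ℝ) : ℂ) = z
            rw [hw, hceq, ← Complex.ofReal_mul, Complex.ofReal_exp]
        · rintro ⟨y, ⟨hy0, hy1⟩, hyz⟩
          have hty : 0 ≤ Real.log y / cR :=
            div_nonneg_iff.mpr (Or.inr ⟨Real.log_nonpos hy0.le hy1, hcR0.le⟩)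
          obtain ⟨w, hw⟩ := sum_norm_sq_surj n hn (Real.log y / cR) hty
          refine ⟨w, ?_⟩
          rw [← hc, hw]
          have hmul : cR * (Real.log y / cR) = Real.log y := by
            field_simp
            rw [mul_div_cancel_left₀ _ (ne_of_lt hcR0)]
          rw [hceq, ← Complex.ofReal_mul, hmul, ← Complex.ofReal_exp, Real.exp_log hy0]
          exact hyz.symm
      rw [hSeq]
      exact (convex_Ioc (0:ℝ) 1).linear_image _
end

section
/- Let n ≥ 1 be a natural number, let α > 0 be real, let k ∈ {1, …, n}, and let a, b ∈ ℝ with a² + b² ≤ 1. Then the set { exp(α·((a + b·i) − 1)·|z_k|²) : z ∈ ℂⁿ } ⊆ ℂ, where exp is the complex exponential, is convex if and only if b = 0. -/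
open Complex Real

/-- The image of a convex set of reals under `Real.exp` is convex. -/
lemma convex_exp_image {C : Set ℝ} (hC : Convex ℝ C) : Convex ℝ (Real.exp '' C) := by
  rintro x ⟨s, hs, rfl⟩ y ⟨u, hu, rfl⟩ lam mu hl hm hlm
  set z := lam * Real.exp s + mu * Real.exp u with hz
  have hmin : Real.exp (min s u) ≤ z := by
    have h1 : Real.exp (min s u) ≤ Real.exp s := Real.exp_le_exp.2 (min_le_left _ _)
    have h2 : Real.exp (min s u) ≤ Real.exp u := Real.exp_le_exp.2 (min_le_right _ _)
    have h3 : lam * Real.exp (min s u) + mu * Real.exp (min s u) = Real.exp (min s u) := by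
      rw [← add_mul, hlm, one_mul]
    linarith [mul_le_mul_of_nonneg_left h1 hl, mul_le_mul_of_nonneg_left h2 hm]
  have hmax : z ≤ Real.exp (max s u) := by
    have h1 : Real.exp s ≤ Real.exp (max s u) := Real.exp_le_exp.2 (le_max_left _ _)
    have h2 : Real.exp u ≤ Real.exp (max s u) := Real.exp_le_exp.2 (le_max_right _ _)
    have h3 : lam * Real.exp (max s u) + mu * Real.exp (max s u) = Real.exp (max s u) := by
      rw [← add_mul, hlm, one_mul]
    linarith [mul_le_mul_of_nonneg_left h1 hl, mul_le_mul_of_nonneg_left h2 hm]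
  have hzpos : 0 < z := lt_of_lt_of_le (Real.exp_pos _) hmin
  have hlog1 : min s u ≤ Real.log z := (Real.le_log_iff_exp_le hzpos).2 hmin
  have hlog2 : Real.log z ≤ max s u := (Real.log_le_iff_le_exp hzpos).2 hmax
  have hminC : min s u ∈ C := by rcases min_cases s u with ⟨h, _⟩ | ⟨h, _⟩ <;> rw [h] <;> assumption
  have hmaxC : max s u ∈ C := by rcases max_cases s u with ⟨h, _⟩ | ⟨h, _⟩ <;> rw [h] <;> assumption
  have : Real.log z ∈ C := hC.ordConnected.out hminC hmaxC ⟨hlog1, hlog2⟩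
  exact ⟨Real.log z, this, Real.exp_log hzpos⟩

/-- Convexity of the Berezin range of the composition operator on the Fock space with
symbol `φ(z) = A_k z`, where `A_k` is diagonal with `k`-th entry `a + b·i` and `1`
elsewhere. -/
theorem stmt19 (n : ℕ) (hn : 1 ≤ n) (α : ℝ) (hα : 0 < α) (k : Fin n)
    (a b : ℝ) (hab : a ^ 2 + b ^ 2 ≤ 1) :
    Convex ℝ {z : ℂ | ∃ v : Fin n → ℂ,
        z = Complex.exp ((α : ℂ) * (((a : ℂ) + (b : ℂ) * Complex.I) - 1)
              * ((‖v k‖ ^ 2 : ℝ) : ℂ))}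
      ↔ b = 0 := by
  set c : ℂ := (α : ℂ) * (((a : ℂ) + (b : ℂ) * Complex.I) - 1) with hc
  have hset : {z : ℂ | ∃ v : Fin n → ℂ, z = Complex.exp (c * ((‖v k‖ ^ 2 : ℝ) : ℂ))}
      = (fun t : ℝ => Complex.exp (c * t)) '' Set.Ici 0 := by
    ext z
    constructor
    · rintro ⟨v, rfl⟩
      exact ⟨‖v k‖ ^ 2, Set.mem_Ici.2 (sq_nonneg _), rfl⟩
    · rintro ⟨t, ht, rfl⟩
      refine ⟨fun _ => ((Real.sqrt t : ℝ) : ℂ), ?_⟩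
      have : ‖((Real.sqrt t : ℝ) : ℂ)‖ ^ 2 = t := by
        rw [Complex.norm_real, Real.norm_eq_abs, _root_.abs_of_nonneg (Real.sqrt_nonneg t),
          Real.sq_sqrt ht]
      rw [this]
  rw [hset]
  set u : ℝ := α * (a - 1) with hu
  set v : ℝ := α * b with hv
  have key : ∀ t : ℝ, Complex.exp (c * t)
      = (Real.exp (u * t) : ℂ) * ((Real.cos (v * t) : ℂ) + (Real.sin (v * t) : ℂ) * Complex.I) := by
    intro t
    have h1 : c * t = ((u * t : ℝ) : ℂ) + ((v * t : ℝ) : ℂ) * Complex.I := by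
      rw [hc, hu, hv]; push_cast; ring
    rw [h1, Complex.exp_add, Complex.exp_mul_I, ← Complex.ofReal_exp, ← Complex.ofReal_cos,
      ← Complex.ofReal_sin]
  constructor
  · -- Convex → b = 0
    intro hconv
    by_contra hb
    have ha1 : a < 1 := by
      have hb2 : 0 < b ^ 2 := by positivity
      nlinarith [sq_nonneg (a - 1)]
    have hu0 : u < 0 := by
      rw [hu]; exact mul_neg_of_pos_of_neg hα (by linarith)
    have hv0 : v ≠ 0 := by
      rw [hv]; exact mul_ne_zero (ne_of_gt hα) hb
    have hvabs : 0 < |v| := abs_pos.2 hv0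
    set T : ℝ := 2 * π / |v| with hT
    have hTpos : 0 < T := div_pos (by positivity) hvabs
    set r : ℝ := Real.exp (u * T) with hr
    have hr1 : r < 1 := by
      rw [hr, ← Real.exp_zero]
      exact Real.exp_lt_exp.2 (mul_neg_of_neg_of_pos hu0 hTpos)
    have hrpos : 0 < r := Real.exp_pos _
    -- two points in the set
    have hx1 : (1 : ℂ) ∈ (fun t : ℝ => Complex.exp (c * t)) '' Set.Ici 0 := by
      refine ⟨0, Set.self_mem_Ici, ?_⟩
      simp
    have hvT : v * T = 2 * π ∨ v * T = -(2 * π) := by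
      rcases abs_cases v with ⟨h, _⟩ | ⟨h, _⟩
      · left; rw [hT, h]; field_simp
      · right
        rw [hT, h]
        have hv0' : -v ≠ 0 := neg_ne_zero.2 hv0
        field_simp
    have hcos : Real.cos (v * T) = 1 := by
      rcases hvT with h | h <;> rw [h] <;> simp [Real.cos_two_pi]
    have hsin : Real.sin (v * T) = 0 := by
      rcases hvT with h | h <;> rw [h] <;> simp [Real.sin_two_pi]
    have hx2 : ((r : ℝ) : ℂ) ∈ (fun t : ℝ => Complex.exp (c * t)) '' Set.Ici 0 := by
      refine ⟨T, le_of_lt hTpos, ?_⟩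
      show Complex.exp (c * (T : ℂ)) = ((r : ℝ) : ℂ)
      rw [key, hcos, hsin, hr]
      push_cast
      ring
    -- midpoint
    set m : ℝ := (1 + r) / 2 with hm
    have hm1 : m < 1 := by rw [hm]; linarith
    have hmr : r < m := by rw [hm]; linarith
    have hmpos : 0 < m := by rw [hm]; linarith
    have hmem : ((m : ℝ) : ℂ) ∈ (fun t : ℝ => Complex.exp (c * t)) '' Set.Ici 0 := by
      have := hconv hx1 hx2 (by norm_num : (0:ℝ) ≤ 1/2) (by norm_num : (0:ℝ) ≤ 1/2) (by norm_num)
      convert this using 1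
      rw [hm]
      push_cast
      rw [Complex.real_smul, Complex.real_smul]
      push_cast
      ring
    obtain ⟨t, ht, hteq⟩ := hmem
    have hteq : Complex.exp (c * (t : ℂ)) = ((m : ℝ) : ℂ) := hteq
    rw [key] at hteq
    have hteq2 : ((Real.exp (u * t) * Real.cos (v * t) : ℝ) : ℂ)
        + ((Real.exp (u * t) * Real.sin (v * t) : ℝ) : ℂ) * Complex.I = ((m : ℝ) : ℂ) := by
      rw [← hteq]; push_cast; ring
    rw [Complex.ext_iff] at hteq2
    obtain ⟨hre, him⟩ := hteq2
    simp only [Complex.add_re, Complex.ofReal_re, Complex.mul_re, Complex.I_re, Complex.I_im,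
      Complex.ofReal_im, Complex.add_im, Complex.mul_im, mul_zero, zero_mul, mul_one, add_zero,
      zero_add, sub_zero] at hre him
    have hsin0 : Real.sin (v * t) = 0 := by
      rcases mul_eq_zero.1 him with h | h
      · exact absurd h (ne_of_gt (Real.exp_pos _))
      · exact h
    have hcospos : 0 < Real.cos (v * t) := by
      by_contra h
      push_neg at h
      nlinarith [Real.exp_pos (u * t)]
    have hcos1 : Real.cos (v * t) = 1 := by
      have h0 : (Real.cos (v * t) - 1) * (Real.cos (v * t) + 1) = 0 := by
        nlinarith [Real.sin_sq_add_cos_sq (v * t)]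
      rcases mul_eq_zero.1 h0 with h | h
      · linarith
      · linarith
    have habs : Real.exp (u * t) = m := by
      rw [hcos1, mul_one] at hre
      exact hre
    obtain ⟨j, hj⟩ := (Real.cos_eq_one_iff _).1 hcos1
    rcases eq_or_ne j 0 with hj0 | hj0
    · -- t = 0, so m = 1, contradiction
      rw [hj0] at hj
      simp only [Int.cast_zero, zero_mul] at hj
      have ht0 : t = 0 := by
        rcases mul_eq_zero.1 hj.symm with h | h
        · exact absurd h hv0
        · exact h
      rw [ht0, mul_zero, Real.exp_zero] at habs
      linarith
    · -- |v t| ≥ 2π so t ≥ T, so m = exp(ut) ≤ r < m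
      have hjabs : (1 : ℝ) ≤ |(j : ℝ)| := by
        rw [← Int.cast_abs]
        exact_mod_cast Int.one_le_abs hj0
      have h2pi : 2 * π ≤ |v * t| := by
        rw [← hj, abs_mul, abs_of_pos (by positivity : (0:ℝ) < 2 * π)]
        nlinarith [Real.pi_pos]
      have hvt : |v * t| = |v| * t := by
        rw [abs_mul v t, _root_.abs_of_nonneg (Set.mem_Ici.1 ht)]
      have htT : T ≤ t := by
        rw [hT, div_le_iff₀ hvabs]
        linarith [hvt, h2pi]
      have h5 : (-u) * T ≤ (-u) * t := mul_le_mul_of_nonneg_left htT (by linarith)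
      have : Real.exp (u * t) ≤ r := by
        rw [hr]
        exact Real.exp_le_exp.2 (by linarith)
      rw [habs] at this
      linarith
  · -- b = 0 → convex
    intro hb
    subst hb
    have hcr : c = ((α * (a - 1) : ℝ) : ℂ) := by rw [hc]; push_cast; ring
    have himg : (fun t : ℝ => Complex.exp (c * t)) '' Set.Ici 0
        = Complex.ofRealAm.toLinearMap ''
            (Real.exp '' ((fun t : ℝ => α * (a - 1) * t) '' Set.Ici 0)) := by
      rw [Set.image_image, Set.image_image]
      apply Set.image_congr
      intro t _
      rw [hcr, ← Complex.ofReal_mul, ← Complex.ofReal_exp]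
      rfl
    rw [himg]
    apply Convex.linear_image
    apply convex_exp_image
    exact (convex_Ici (0:ℝ)).linear_image (LinearMap.mul ℝ ℝ (α * (a - 1)))
end
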